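/- For τ > −1 and C ∈ ℝ, define I_τ(C) = ∫_0^∞ r^τ · exp(−(r + C)²/2) dr. Then for every τ > 0, the function C ↦ ln I_τ(C) is strictly concave on ℝ: it is twice differentiable and its second derivative is strictly negative at every C ∈ ℝ. -/

import Mathlib

open Real

/-- `I_τ(C) = ∫_0^∞ r^τ exp(−(r+C)²/2) dr`. -/
noncomputable def Igauss (τ C : ℝ) : ℝ :=
  ∫ r in Set.Ioi (0 : ℝ), r ^ τ * Real.exp (-(r + C) ^ 2 / 2)

section IGauxSection
open MeasureTheory Set Filter Topology Metric

namespace IGaux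

/-- continuity on Ioi 0 of the integrand -/
lemma contOn (σ C : ℝ) : ContinuousOn (fun r : ℝ => r ^ σ * Real.exp (-(r + C) ^ 2 / 2)) (Ioi 0) := by
  apply ContinuousOn.mul
  · exact fun x hx => (Real.continuousAt_rpow_const x σ (Or.inl hx.ne')).continuousWithinAt
  · fun_prop

lemma meas (σ C : ℝ) : AEStronglyMeasurable (fun r : ℝ => r ^ σ * Real.exp (-(r + C) ^ 2 / 2))
    (volume.restrict (Ioi 0)) :=
  (contOn σ C).aestronglyMeasurable measurableSet_Ioi

lemma exp_bound {r C K : ℝ} (hr : 0 ≤ r) (hC : |C| ≤ K) :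
    Real.exp (-(r + C) ^ 2 / 2) ≤ Real.exp (K ^ 2) * Real.exp (-(1/4) * r ^ 2) := by
  rw [← Real.exp_add]
  apply Real.exp_le_exp.2
  have h1 : -K ≤ C := neg_le_of_abs_le hC
  have h2 : C ≤ K := le_of_abs_le hC
  nlinarith [sq_nonneg (r - 2*K), mul_nonneg hr (by linarith : (0:ℝ) ≤ C + K)]

lemma integrableOn_K (σ : ℝ) (hσ : -1 < σ) {C K : ℝ} (hC : |C| ≤ K) :
    IntegrableOn (fun r : ℝ => r ^ σ * Real.exp (-(r + C) ^ 2 / 2)) (Ioi 0) := by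
  have hbase : IntegrableOn (fun r : ℝ => Real.exp (K ^ 2) * (r ^ σ * Real.exp (-(1/4) * r ^ 2)))
      (Ioi 0) :=
    (integrableOn_rpow_mul_exp_neg_mul_sq (by norm_num) hσ).const_mul _
  apply hbase.mono' (meas σ C)
  filter_upwards [ae_restrict_mem measurableSet_Ioi] with r hr
  have hr0 : (0:ℝ) < r := hr
  have h1 : (0:ℝ) ≤ r ^ σ := (Real.rpow_pos_of_pos hr0 σ).le
  rw [Real.norm_eq_abs, abs_of_nonneg (by positivity)]
  calc r ^ σ * Real.exp (-(r + C) ^ 2 / 2)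
      ≤ r ^ σ * (Real.exp (K ^ 2) * Real.exp (-(1/4) * r ^ 2)) := by
        exact mul_le_mul_of_nonneg_left (exp_bound hr0.le hC) h1
    _ = Real.exp (K ^ 2) * (r ^ σ * Real.exp (-(1/4) * r ^ 2)) := by ring

lemma integrableOn (σ : ℝ) (hσ : -1 < σ) (C : ℝ) :
    IntegrableOn (fun r : ℝ => r ^ σ * Real.exp (-(r + C) ^ 2 / 2)) (Ioi 0) :=
  integrableOn_K σ hσ (le_refl |C|)

lemma pos (σ : ℝ) (hσ : -1 < σ) (C : ℝ) :
    0 < ∫ r in Ioi (0:ℝ), r ^ σ * Real.exp (-(r + C) ^ 2 / 2) := by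
  rw [setIntegral_pos_iff_support_of_nonneg_ae ?_ (integrableOn σ hσ C)]
  · apply lt_of_lt_of_le _ (measure_mono (?_ : Ioi (0:ℝ) ⊆ _))
    · simp [Real.volume_Ioi]
    · intro r hr
      refine ⟨?_, hr⟩
      have : (0:ℝ) < r ^ σ * Real.exp (-(r + C) ^ 2 / 2) :=
        mul_pos (Real.rpow_pos_of_pos hr σ) (Real.exp_pos _)
      exact Function.mem_support.2 this.ne'
  · filter_upwards [ae_restrict_mem measurableSet_Ioi] with r hr
    have hr0 : (0:ℝ) < r := hr
    exact (mul_pos (Real.rpow_pos_of_pos hr0 σ) (Real.exp_pos _)).le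

lemma tendsto_top (σ C : ℝ) :
    Tendsto (fun r : ℝ => r ^ σ * Real.exp (-(r + C) ^ 2 / 2)) atTop (𝓝 0) := by
  have key : Tendsto (fun r : ℝ => σ * Real.log r + (-(r + C) ^ 2 / 2)) atTop atBot := by
    apply tendsto_atBot_mono' atTop
      (?_ : ∀ᶠ r in atTop, σ * Real.log r + (-(r + C) ^ 2 / 2) ≤ -r)
    · exact tendsto_neg_atBot_iff.2 tendsto_id
    · filter_upwards [eventually_ge_atTop (1:ℝ),
        eventually_ge_atTop (4*|σ| + 4 + 4*|C| + C^2)] with r h1 h2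
      have hlog : Real.log r ≤ r := Real.log_le_sub_one_of_pos (by linarith) |>.trans (by linarith)
      have hlog0 : 0 ≤ Real.log r := Real.log_nonneg h1
      have hs : σ * Real.log r ≤ |σ| * r := by
        calc σ * Real.log r ≤ |σ| * Real.log r := mul_le_mul_of_nonneg_right (le_abs_self σ) hlog0
          _ ≤ |σ| * r := mul_le_mul_of_nonneg_left hlog (abs_nonneg σ)
      have hC1 : -|C| ≤ C := neg_abs_le C
      nlinarith [abs_nonneg σ, abs_nonneg C]
  have := (Real.tendsto_exp_atBot).comp key
  apply this.congr'
  filter_upwards [eventually_gt_atTop (0:ℝ)] with r hr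
  simp only [Function.comp]
  rw [Real.exp_add, Real.rpow_def_of_pos hr, mul_comm (Real.log r) σ]

lemma rpow_succ {r : ℝ} (hr : 0 < r) (σ : ℝ) : r ^ (σ + 1) = r ^ σ * r :=
  Real.rpow_add_one (ne_of_gt hr) σ

lemma rpow_pred {r : ℝ} (hr : 0 < r) (σ : ℝ) : r ^ σ = r ^ (σ - 1) * r := by
  rw [← Real.rpow_add_one (ne_of_gt hr) (σ - 1)]; ring_nf

lemma integrableOn_lin (σ : ℝ) (hσ : -1 < σ) (C : ℝ) :
    IntegrableOn (fun r : ℝ => (r + C) * (r ^ σ * Real.exp (-(r + C) ^ 2 / 2))) (Ioi 0) := by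
  have h : IntegrableOn (fun r : ℝ => r ^ (σ+1) * Real.exp (-(r + C) ^ 2 / 2)
      + C * (r ^ σ * Real.exp (-(r + C) ^ 2 / 2))) (Ioi 0) :=
    (integrableOn (σ+1) (by linarith) C).add ((integrableOn σ hσ C).const_mul C)
  apply h.congr_fun ?_ measurableSet_Ioi
  intro r hr
  simp only [rpow_succ hr σ]; ring

lemma integrableOn_quad (σ : ℝ) (hσ : -1 < σ) (C : ℝ) :
    IntegrableOn (fun r : ℝ => (r + C) ^ 2 * (r ^ σ * Real.exp (-(r + C) ^ 2 / 2))) (Ioi 0) := by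
  have h : IntegrableOn (fun r : ℝ => (r ^ (σ+1+1) * Real.exp (-(r + C) ^ 2 / 2)
      + (2*C) * (r ^ (σ+1) * Real.exp (-(r + C) ^ 2 / 2)))
      + C^2 * (r ^ σ * Real.exp (-(r + C) ^ 2 / 2))) (Ioi 0) :=
    ((integrableOn (σ+1+1) (by linarith) C).add
      ((integrableOn (σ+1) (by linarith) C).const_mul (2*C))).add
      ((integrableOn σ hσ C).const_mul (C^2))
  apply h.congr_fun ?_ measurableSet_Ioi
  intro r hr
  simp only [rpow_succ hr]; ring

lemma hasDerivAt_w (C r : ℝ) :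
    HasDerivAt (fun s : ℝ => Real.exp (-(s + C) ^ 2 / 2))
      (-(r + C) * Real.exp (-(r + C) ^ 2 / 2)) r := by
  have h1 : HasDerivAt (fun s : ℝ => -(s + C) ^ 2 / 2) (-(r + C)) r := by
    have := (((hasDerivAt_id r).add_const C).pow 2).neg.div_const 2
    exact this.congr_deriv (by simp; ring)
  have := h1.exp
  convert this using 1; ring

lemma hasDerivAt_phi (τ : ℝ) (C : ℝ) {r : ℝ} (hr : 0 < r) :
    HasDerivAt (fun s : ℝ => s ^ τ * Real.exp (-(s + C) ^ 2 / 2))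
      (τ * (r ^ (τ-1) * Real.exp (-(r + C) ^ 2 / 2))
        - (r + C) * (r ^ τ * Real.exp (-(r + C) ^ 2 / 2))) r := by
  have := (Real.hasDerivAt_rpow_const (p := τ) (Or.inl (ne_of_gt hr))).mul (hasDerivAt_w C r)
  exact this.congr_deriv (by ring)

lemma cwa0 (τ : ℝ) (hτ : 0 < τ) (C : ℝ) :
    ContinuousWithinAt (fun r : ℝ => r ^ τ * Real.exp (-(r + C) ^ 2 / 2)) (Ici 0) 0 := by
  apply ContinuousAt.continuousWithinAt
  exact (Real.continuousAt_rpow_const 0 τ (Or.inr hτ.le)).mul (by fun_prop)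

lemma int_lin_eq (σ : ℝ) (hσ : -1 < σ) (C : ℝ) :
    ∫ r in Ioi (0:ℝ), (r + C) * (r ^ σ * Real.exp (-(r + C) ^ 2 / 2))
      = (∫ r in Ioi (0:ℝ), r ^ (σ+1) * Real.exp (-(r + C) ^ 2 / 2))
        + C * ∫ r in Ioi (0:ℝ), r ^ σ * Real.exp (-(r + C) ^ 2 / 2) := by
  rw [← integral_const_mul, ← integral_add (integrableOn (σ+1) (by linarith) C)
    ((integrableOn σ hσ C).const_mul C)]
  apply setIntegral_congr_fun measurableSet_Ioi
  intro r hr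
  simp only [rpow_succ hr σ]; ring

lemma id1 (τ : ℝ) (hτ : 0 < τ) (C : ℝ) :
    ∫ r in Ioi (0:ℝ), (r + C) * (r ^ τ * Real.exp (-(r + C) ^ 2 / 2))
      = τ * ∫ r in Ioi (0:ℝ), r ^ (τ-1) * Real.exp (-(r + C) ^ 2 / 2) := by
  have hint1 : IntegrableOn (fun r : ℝ => τ * (r ^ (τ-1) * Real.exp (-(r + C) ^ 2 / 2)))
      (Ioi 0) := (integrableOn (τ-1) (by linarith) C).const_mul τ
  have hint2 := integrableOn_lin τ (by linarith) C
  have h0 : ∫ r in Ioi (0:ℝ), (τ * (r ^ (τ-1) * Real.exp (-(r + C) ^ 2 / 2))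
      - (r + C) * (r ^ τ * Real.exp (-(r + C) ^ 2 / 2)))
      = 0 - (0:ℝ) ^ τ * Real.exp (-(0 + C) ^ 2 / 2) := by
    exact integral_Ioi_of_hasDerivAt_of_tendsto (cwa0 τ hτ C)
      (fun r hr => hasDerivAt_phi τ C hr) (hint1.sub hint2) (tendsto_top τ C)
  rw [Real.zero_rpow (ne_of_gt hτ)] at h0
  rw [integral_sub hint1 hint2, integral_const_mul] at h0
  linarith

lemma id2 (τ : ℝ) (hτ : 0 < τ) (C : ℝ) :
    ∫ r in Ioi (0:ℝ), (r + C) ^ 2 * (r ^ τ * Real.exp (-(r + C) ^ 2 / 2))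
      = (∫ r in Ioi (0:ℝ), r ^ τ * Real.exp (-(r + C) ^ 2 / 2))
        + τ * ((∫ r in Ioi (0:ℝ), r ^ τ * Real.exp (-(r + C) ^ 2 / 2))
          + C * ∫ r in Ioi (0:ℝ), r ^ (τ-1) * Real.exp (-(r + C) ^ 2 / 2)) := by
  have hτ1 : (-1:ℝ) < τ - 1 := by linarith
  have hint_a := integrableOn τ (by linarith) C
  have hint_b : IntegrableOn
      (fun r : ℝ => τ * ((r + C) * (r ^ (τ-1) * Real.exp (-(r + C) ^ 2 / 2)))) (Ioi 0) :=
    (integrableOn_lin (τ-1) hτ1 C).const_mul τ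
  have hint_ab : IntegrableOn (fun r : ℝ => r ^ τ * Real.exp (-(r + C) ^ 2 / 2)
      + τ * ((r + C) * (r ^ (τ-1) * Real.exp (-(r + C) ^ 2 / 2)))) (Ioi 0) :=
    hint_a.add hint_b
  have hint_c := integrableOn_quad τ (by linarith) C
  have hderiv : ∀ r ∈ Ioi (0:ℝ), HasDerivAt
      (fun s : ℝ => (s + C) * (s ^ τ * Real.exp (-(s + C) ^ 2 / 2)))
      (r ^ τ * Real.exp (-(r + C) ^ 2 / 2)
        + τ * ((r + C) * (r ^ (τ-1) * Real.exp (-(r + C) ^ 2 / 2)))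
        - (r + C) ^ 2 * (r ^ τ * Real.exp (-(r + C) ^ 2 / 2))) r := by
    intro r hr
    have := ((hasDerivAt_id r).add_const C).mul (hasDerivAt_phi τ C hr)
    exact this.congr_deriv (by simp only [id_eq]; ring)
  have hcwa : ContinuousWithinAt
      (fun s : ℝ => (s + C) * (s ^ τ * Real.exp (-(s + C) ^ 2 / 2))) (Ici 0) 0 :=
    (Continuous.continuousWithinAt (by fun_prop)).mul (cwa0 τ hτ C)
  have htend : Tendsto (fun s : ℝ => (s + C) * (s ^ τ * Real.exp (-(s + C) ^ 2 / 2)))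
      atTop (𝓝 0) := by
    have := (tendsto_top (τ+1) C).add ((tendsto_top τ C).const_mul C)
    simp only [mul_zero, add_zero] at this
    apply this.congr'
    filter_upwards [eventually_gt_atTop (0:ℝ)] with r hr
    simp only [rpow_succ hr τ]; ring
  have h0 := integral_Ioi_of_hasDerivAt_of_tendsto hcwa hderiv (hint_ab.sub hint_c) htend
  rw [Real.zero_rpow (ne_of_gt hτ)] at h0
  rw [integral_sub hint_ab hint_c, integral_add hint_a hint_b,
    integral_const_mul, int_lin_eq (τ-1) hτ1 C, show τ - 1 + 1 = τ by ring] at h0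
  simp only [zero_add, mul_zero, zero_mul, sub_zero] at h0
  linarith

lemma cs (τ : ℝ) (hτ : 0 < τ) (C : ℝ) :
    (∫ r in Ioi (0:ℝ), r ^ τ * Real.exp (-(r + C) ^ 2 / 2)) ^ 2
      < (∫ r in Ioi (0:ℝ), r ^ (τ-1) * Real.exp (-(r + C) ^ 2 / 2))
        * ∫ r in Ioi (0:ℝ), r ^ (τ+1) * Real.exp (-(r + C) ^ 2 / 2) := by
  set a := ∫ r in Ioi (0:ℝ), r ^ (τ-1) * Real.exp (-(r + C) ^ 2 / 2) with ha_def
  set b := ∫ r in Ioi (0:ℝ), r ^ τ * Real.exp (-(r + C) ^ 2 / 2) with hb_def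
  set c := ∫ r in Ioi (0:ℝ), r ^ (τ+1) * Real.exp (-(r + C) ^ 2 / 2) with hc_def
  have ha : 0 < a := pos (τ-1) (by linarith) C
  set t := b / a with ht_def
  have heq : EqOn
      (fun r : ℝ => (r ^ (τ+1) * Real.exp (-(r + C) ^ 2 / 2)
        - (2*t) * (r ^ τ * Real.exp (-(r + C) ^ 2 / 2)))
        + t^2 * (r ^ (τ-1) * Real.exp (-(r + C) ^ 2 / 2)))
      (fun r : ℝ => (r - t) ^ 2 * (r ^ (τ-1) * Real.exp (-(r + C) ^ 2 / 2))) (Ioi 0) := by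
    intro r hr
    have h1 : r ^ τ = r ^ (τ-1) * r := rpow_pred hr τ
    have h2 : r ^ (τ+1) = r ^ τ * r := rpow_succ hr τ
    simp only [h2, h1]; ring
  have hint1 := integrableOn (τ+1) (by linarith) C
  have hint2 : IntegrableOn (fun r : ℝ => (2*t) * (r ^ τ * Real.exp (-(r + C) ^ 2 / 2)))
      (Ioi 0) := (integrableOn τ (by linarith) C).const_mul (2*t)
  have hint3 : IntegrableOn (fun r : ℝ => t^2 * (r ^ (τ-1) * Real.exp (-(r + C) ^ 2 / 2)))
      (Ioi 0) := (integrableOn (τ-1) (by linarith) C).const_mul (t^2)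
  have hint12 : IntegrableOn (fun r : ℝ => r ^ (τ+1) * Real.exp (-(r + C) ^ 2 / 2)
      - (2*t) * (r ^ τ * Real.exp (-(r + C) ^ 2 / 2))) (Ioi 0) := hint1.sub hint2
  have hintS : IntegrableOn (fun r : ℝ => (r ^ (τ+1) * Real.exp (-(r + C) ^ 2 / 2)
      - (2*t) * (r ^ τ * Real.exp (-(r + C) ^ 2 / 2)))
      + t^2 * (r ^ (τ-1) * Real.exp (-(r + C) ^ 2 / 2))) (Ioi 0) := hint12.add hint3
  have hint : IntegrableOn
      (fun r : ℝ => (r - t) ^ 2 * (r ^ (τ-1) * Real.exp (-(r + C) ^ 2 / 2))) (Ioi 0) :=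
    hintS.congr_fun heq measurableSet_Ioi
  have hpos : 0 < ∫ r in Ioi (0:ℝ), (r - t) ^ 2 * (r ^ (τ-1) * Real.exp (-(r + C) ^ 2 / 2)) := by
    rw [setIntegral_pos_iff_support_of_nonneg_ae ?_ hint]
    · apply lt_of_lt_of_le _ (measure_mono (?_ : Ioi (0:ℝ) \ {t} ⊆ _))
      · rw [measure_diff_null (measure_singleton t)]
        simp [Real.volume_Ioi]
      · rintro r ⟨hr, hrt⟩
        refine ⟨Function.mem_support.2 ?_, hr⟩
        have h1 : (0:ℝ) < r ^ (τ-1) * Real.exp (-(r + C) ^ 2 / 2) :=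
          mul_pos (Real.rpow_pos_of_pos hr (τ-1)) (Real.exp_pos _)
        have h2 : r - t ≠ 0 := sub_ne_zero.2 (by simpa using hrt)
        positivity
    · filter_upwards [ae_restrict_mem measurableSet_Ioi] with r hr
      have hr0 : (0:ℝ) < r := hr
      have := (mul_pos (Real.rpow_pos_of_pos hr0 (τ-1)) (Real.exp_pos (-(r + C) ^ 2 / 2))).le
      positivity
  have heval : ∫ r in Ioi (0:ℝ), (r - t) ^ 2 * (r ^ (τ-1) * Real.exp (-(r + C) ^ 2 / 2))
      = c - 2*t*b + t^2 * a := by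
    rw [← setIntegral_congr_fun measurableSet_Ioi heq,
      integral_add hint12 hint3, integral_sub hint1 hint2,
      integral_const_mul, integral_const_mul]
  rw [heval] at hpos
  have e1 : t ^ 2 * a = b^2 / a := by rw [ht_def]; field_simp
  have e2 : 2 * t * b = 2 * (b^2 / a) := by rw [ht_def]; ring
  rw [e1, e2] at hpos
  have hlt : b^2 / a < c := by linarith
  calc b ^ 2 = (b^2 / a) * a := (div_mul_cancel₀ _ ha.ne').symm
    _ < c * a := mul_lt_mul_of_pos_right hlt ha
    _ = a * c := mul_comm c a

lemma hasDerivAt_w' (r τ : ℝ) (x : ℝ) :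
    HasDerivAt (fun y : ℝ => r ^ τ * Real.exp (-(r + y) ^ 2 / 2))
      (-((r + x) * (r ^ τ * Real.exp (-(r + x) ^ 2 / 2)))) x := by
  have h1 : HasDerivAt (fun y : ℝ => -(r + y) ^ 2 / 2) (-(r + x)) x := by
    have := (((hasDerivAt_id x).const_add r).pow 2).neg.div_const 2
    exact this.congr_deriv (by simp; ring)
  have := h1.exp.const_mul (r ^ τ)
  exact this.congr_deriv (by ring)

lemma hasDerivAt_lin' (r τ : ℝ) (x : ℝ) :
    HasDerivAt (fun y : ℝ => (r + y) * (r ^ τ * Real.exp (-(r + y) ^ 2 / 2)))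
      ((1 - (r + x) ^ 2) * (r ^ τ * Real.exp (-(r + x) ^ 2 / 2))) x := by
  have := ((hasDerivAt_id x).const_add r).mul (hasDerivAt_w' r τ x)
  exact this.congr_deriv (by simp only [id_eq]; ring)

lemma hasDeriv1 (τ : ℝ) (hτ : -1 < τ) (C : ℝ) :
    HasDerivAt (fun x : ℝ => ∫ r in Ioi (0:ℝ), r ^ τ * Real.exp (-(r + x) ^ 2 / 2))
      (∫ r in Ioi (0:ℝ), -((r + C) * (r ^ τ * Real.exp (-(r + C) ^ 2 / 2)))) C := by
  set K := |C| + 1 with hK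
  have hK0 : 0 ≤ K := by positivity
  have hbint : Integrable (fun r : ℝ => Real.exp (K ^ 2) * (r ^ (τ+1) * Real.exp (-(1/4) * r ^ 2)
      + K * (r ^ τ * Real.exp (-(1/4) * r ^ 2)))) (volume.restrict (Ioi 0)) :=
    (((integrableOn_rpow_mul_exp_neg_mul_sq (by norm_num) (by linarith : (-1:ℝ) < τ + 1)).add
      ((integrableOn_rpow_mul_exp_neg_mul_sq (by norm_num) hτ).const_mul K)).const_mul
      (Real.exp (K ^ 2)))
  have := hasDerivAt_integral_of_dominated_loc_of_deriv_le (μ := volume.restrict (Ioi 0))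
    (F := fun x r => r ^ τ * Real.exp (-(r + x) ^ 2 / 2))
    (F' := fun x r => -((r + x) * (r ^ τ * Real.exp (-(r + x) ^ 2 / 2))))
    (x₀ := C) (s := Metric.ball C 1) (Metric.ball_mem_nhds C one_pos)
    (Eventually.of_forall fun x => meas τ x) (integrableOn τ hτ C)
    ?_ ?_ hbint ?_
  · exact this.2
  · exact ((((continuous_id.add continuous_const).continuousOn).mul
      (contOn τ C)).neg.aestronglyMeasurable measurableSet_Ioi)
  · filter_upwards [ae_restrict_mem measurableSet_Ioi] with r hr
    intro x hx
    have hr0 : (0:ℝ) < r := hr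
    have hxK : |x| ≤ K := by
      have := mem_ball_iff_norm.1 hx
      rw [Real.norm_eq_abs] at this
      calc |x| ≤ |x - C| + |C| := by simpa using abs_add_le (x - C) C
        _ ≤ K := by rw [hK]; linarith
    have hx1 : -K ≤ x := neg_le_of_abs_le hxK
    have hx2 : x ≤ K := le_of_abs_le hxK
    have hrpow : (0:ℝ) ≤ r ^ τ := (Real.rpow_pos_of_pos hr0 τ).le
    have habs : |r + x| ≤ r + K := abs_le.2 ⟨by linarith, by linarith⟩
    have hw : r ^ τ * Real.exp (-(r + x) ^ 2 / 2)
        ≤ r ^ τ * (Real.exp (K ^ 2) * Real.exp (-(1/4) * r ^ 2)) :=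
      mul_le_mul_of_nonneg_left (exp_bound hr0.le hxK) hrpow
    calc ‖-((r + x) * (r ^ τ * Real.exp (-(r + x) ^ 2 / 2)))‖
        = |r + x| * (r ^ τ * Real.exp (-(r + x) ^ 2 / 2)) := by
          rw [Real.norm_eq_abs, abs_neg, abs_mul,
            abs_of_nonneg (mul_nonneg hrpow (Real.exp_pos _).le)]
      _ ≤ (r + K) * (r ^ τ * (Real.exp (K ^ 2) * Real.exp (-(1/4) * r ^ 2))) := by
          apply mul_le_mul habs hw (mul_nonneg hrpow (Real.exp_pos _).le) (by linarith)
      _ = Real.exp (K ^ 2) * (r ^ (τ+1) * Real.exp (-(1/4) * r ^ 2)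
            + K * (r ^ τ * Real.exp (-(1/4) * r ^ 2))) := by
          rw [rpow_succ hr0 τ]; ring
  · exact Eventually.of_forall fun r => fun x _ => hasDerivAt_w' r τ x

lemma hasDeriv2 (τ : ℝ) (hτ : -1 < τ) (C : ℝ) :
    HasDerivAt (fun x : ℝ => ∫ r in Ioi (0:ℝ), (r + x) * (r ^ τ * Real.exp (-(r + x) ^ 2 / 2)))
      (∫ r in Ioi (0:ℝ), (1 - (r + C) ^ 2) * (r ^ τ * Real.exp (-(r + C) ^ 2 / 2))) C := by
  set K := |C| + 1 with hK
  have hK0 : 0 ≤ K := by positivity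
  have hbint : Integrable (fun r : ℝ => Real.exp (K ^ 2) * (((1 + K^2)
      * (r ^ τ * Real.exp (-(1/4) * r ^ 2))
      + (2*K) * (r ^ (τ+1) * Real.exp (-(1/4) * r ^ 2)))
      + r ^ (τ+1+1) * Real.exp (-(1/4) * r ^ 2))) (volume.restrict (Ioi 0)) :=
    ((((integrableOn_rpow_mul_exp_neg_mul_sq (by norm_num) hτ).const_mul (1 + K^2)).add
      ((integrableOn_rpow_mul_exp_neg_mul_sq (by norm_num)
        (by linarith : (-1:ℝ) < τ + 1)).const_mul (2*K))).add
      (integrableOn_rpow_mul_exp_neg_mul_sq (by norm_num)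
        (by linarith : (-1:ℝ) < τ + 1 + 1))).const_mul (Real.exp (K ^ 2))
  have := hasDerivAt_integral_of_dominated_loc_of_deriv_le (μ := volume.restrict (Ioi 0))
    (F := fun x r => (r + x) * (r ^ τ * Real.exp (-(r + x) ^ 2 / 2)))
    (F' := fun x r => (1 - (r + x) ^ 2) * (r ^ τ * Real.exp (-(r + x) ^ 2 / 2)))
    (x₀ := C) (s := Metric.ball C 1) (Metric.ball_mem_nhds C one_pos)
    (Eventually.of_forall fun x => (((continuous_id.add continuous_const).continuousOn).mul
      (contOn τ x)).aestronglyMeasurable measurableSet_Ioi)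
    (integrableOn_lin τ hτ C)
    ?_ ?_ hbint ?_
  · exact this.2
  · exact ((((continuous_const.sub ((continuous_id.add continuous_const).pow 2)).continuousOn).mul
      (contOn τ C)).aestronglyMeasurable measurableSet_Ioi)
  · filter_upwards [ae_restrict_mem measurableSet_Ioi] with r hr
    intro x hx
    have hr0 : (0:ℝ) < r := hr
    have hxK : |x| ≤ K := by
      have := mem_ball_iff_norm.1 hx
      rw [Real.norm_eq_abs] at this
      calc |x| ≤ |x - C| + |C| := by simpa using abs_add_le (x - C) C
        _ ≤ K := by rw [hK]; linarith
    have hx1 : -K ≤ x := neg_le_of_abs_le hxK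
    have hx2 : x ≤ K := le_of_abs_le hxK
    have hrpow : (0:ℝ) ≤ r ^ τ := (Real.rpow_pos_of_pos hr0 τ).le
    have habs : (r + x) ^ 2 ≤ (r + K) ^ 2 := sq_le_sq' (by linarith) (by linarith)
    have h1 : |1 - (r + x) ^ 2| ≤ 1 + (r + K) ^ 2 := by
      rw [abs_sub_comm]
      calc |(r + x) ^ 2 - 1| ≤ |(r+x)^2| + |1| := abs_sub _ _
        _ = (r + x) ^ 2 + 1 := by rw [abs_of_nonneg (sq_nonneg _), abs_one]
        _ ≤ 1 + (r + K) ^ 2 := by linarith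
    have hw : r ^ τ * Real.exp (-(r + x) ^ 2 / 2)
        ≤ r ^ τ * (Real.exp (K ^ 2) * Real.exp (-(1/4) * r ^ 2)) :=
      mul_le_mul_of_nonneg_left (exp_bound hr0.le hxK) hrpow
    calc ‖(1 - (r + x) ^ 2) * (r ^ τ * Real.exp (-(r + x) ^ 2 / 2))‖
        = |1 - (r + x) ^ 2| * (r ^ τ * Real.exp (-(r + x) ^ 2 / 2)) := by
          rw [Real.norm_eq_abs, abs_mul,
            abs_of_nonneg (mul_nonneg hrpow (Real.exp_pos _).le)]
      _ ≤ (1 + (r + K) ^ 2) * (r ^ τ * (Real.exp (K ^ 2) * Real.exp (-(1/4) * r ^ 2))) := by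
          apply mul_le_mul h1 hw (mul_nonneg hrpow (Real.exp_pos _).le) (by positivity)
      _ = Real.exp (K ^ 2) * (((1 + K^2) * (r ^ τ * Real.exp (-(1/4) * r ^ 2))
            + (2*K) * (r ^ (τ+1) * Real.exp (-(1/4) * r ^ 2)))
            + r ^ (τ+1+1) * Real.exp (-(1/4) * r ^ 2)) := by
          rw [rpow_succ hr0 (τ+1), rpow_succ hr0 τ]; ring
  · exact Eventually.of_forall fun r => fun x _ => hasDerivAt_lin' r τ x

end IGaux
end IGauxSection

section IGmain
open MeasureTheory Set Filter Topology IGaux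

/-- For `τ > 0`, the function `C ↦ ln I_τ(C)` is strictly concave on ℝ:
it is twice differentiable and its second derivative is strictly negative. -/
theorem Igauss_log_strictConcave (τ : ℝ) (hτ : 0 < τ) :
    StrictConcaveOn ℝ Set.univ (fun C => Real.log (Igauss τ C)) ∧
      Differentiable ℝ (fun C => Real.log (Igauss τ C)) ∧
      Differentiable ℝ (deriv fun C => Real.log (Igauss τ C)) ∧
      ∀ C : ℝ, deriv (deriv fun C => Real.log (Igauss τ C)) C < 0 := by
  have hτ1 : (-1:ℝ) < τ := by linarith
  set J : ℝ → ℝ := fun x => ∫ r in Ioi (0:ℝ), (r + x) * (r ^ τ * Real.exp (-(r + x) ^ 2 / 2))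
    with hJ_def
  set Kk : ℝ → ℝ := fun x => ∫ r in Ioi (0:ℝ), (1 - (r + x) ^ 2)
    * (r ^ τ * Real.exp (-(r + x) ^ 2 / 2)) with hKk_def
  have hApos : ∀ x : ℝ, 0 < Igauss τ x := fun x => pos τ hτ1 x
  have hI : ∀ x : ℝ, HasDerivAt (Igauss τ) (-(J x)) x := by
    intro x
    have h := hasDeriv1 τ hτ1 x
    rw [integral_neg] at h
    exact h
  have hJd : ∀ x : ℝ, HasDerivAt J (Kk x) x := fun x => hasDeriv2 τ hτ1 x
  have hf : ∀ x : ℝ, HasDerivAt (fun C => Real.log (Igauss τ C)) (-(J x) / Igauss τ x) x :=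
    fun x => (hI x).log (hApos x).ne'
  have hderiv_f : (deriv fun C => Real.log (Igauss τ C)) = fun x => -(J x) / Igauss τ x :=
    funext fun x => (hf x).deriv
  have hg : ∀ x : ℝ, HasDerivAt (fun y => -(J y) / Igauss τ y)
      ((-(Kk x) * Igauss τ x - -(J x) * -(J x)) / Igauss τ x ^ 2) x :=
    fun x => ((hJd x).neg).div (hI x) (hApos x).ne'
  have hneg : ∀ C : ℝ, deriv (deriv fun C => Real.log (Igauss τ C)) C < 0 := by
    intro C
    rw [hderiv_f, (hg C).deriv]
    apply div_neg_of_neg_of_pos _ (pow_pos (hApos C) 2)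
    -- numerator < 0
    set A := Igauss τ C with hA_def
    set a := ∫ r in Ioi (0:ℝ), r ^ (τ-1) * Real.exp (-(r + C) ^ 2 / 2) with ha_def
    set c := ∫ r in Ioi (0:ℝ), r ^ (τ+1) * Real.exp (-(r + C) ^ 2 / 2) with hc_def
    set D := ∫ r in Ioi (0:ℝ), (r + C) ^ 2 * (r ^ τ * Real.exp (-(r + C) ^ 2 / 2)) with hD_def
    have hKk : Kk C = A - D := by
      rw [hKk_def, hA_def, hD_def]
      simp only [Igauss]
      rw [← integral_sub (integrableOn τ hτ1 C) (integrableOn_quad τ hτ1 C)]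
      apply setIntegral_congr_fun measurableSet_Ioi
      intro r hr; ring
    have hJ1 : J C = τ * a := id1 τ hτ C
    have hJ2 : J C = c + C * A := by
      have := int_lin_eq τ hτ1 C
      rw [hJ_def]
      exact this
    have hD : D = A + τ * (A + C * a) := by
      have := id2 τ hτ C
      exact this
    have hcs : A ^ 2 < a * c := by
      have := cs τ hτ C
      exact this
    have hCA : C * A = τ * a - c := by linarith
    have hnum : -(Kk C) * A - -(J C) * -(J C) = τ * (A ^ 2 - a * c) := by
      calc -(Kk C) * A - -(J C) * -(J C)
          = τ * A ^ 2 + τ * ((C * A) * a) - (τ * a) ^ 2 := by rw [hKk, hD, hJ1]; ring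
        _ = τ * (A ^ 2 - a * c) := by rw [hCA]; ring
    rw [hnum]
    exact mul_neg_of_pos_of_neg hτ (by linarith)
  have hdiff : Differentiable ℝ (fun C => Real.log (Igauss τ C)) :=
    fun x => (hf x).differentiableAt
  have hdiff2 : Differentiable ℝ (deriv fun C => Real.log (Igauss τ C)) := by
    rw [hderiv_f]
    exact fun x => (hg x).differentiableAt
  refine ⟨?_, hdiff, hdiff2, hneg⟩
  apply strictConcaveOn_of_deriv2_neg convex_univ hdiff.continuous.continuousOn
  intro x _
  have : deriv^[2] (fun C => Real.log (Igauss τ C)) x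
      = deriv (deriv fun C => Real.log (Igauss τ C)) x := by
    simp [Function.iterate_succ, Function.iterate_zero]
  rw [this]
  exact hneg x

end IGmain
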